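/- arXiv:2305.18772 — 9 statements merged into one kernel-verified Lean document; each statement's English description precedes it below -/
import Mathlib

section
/- There is no v : ℕ → Bool such that for all i, v(i) = true ↔ ∀ j > i, v(j) = false; moreover, assuming such v, both v(0) = true and v(0) = false lead to contradiction. -/
lemma yablo_aux (v : ℕ → Bool) (h : ∀ i : ℕ, (v i = true ↔ ∀ j, i < j → v j = false)) :
    False := by
  have key : ∀ i, v i ≠ true := by
    intro i hi
    have hall := (h i).mp hi
    have h1 : v (i+1) = true := (h (i+1)).mpr (fun j hj => hall j (by omega))
    have h2 : v (i+1) = false := hall (i+1) (by omega)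
    simp [h1] at h2
  exact key 0 ((h 0).mpr (fun j hj => Bool.not_eq_true _ |>.mp (key j)))

/-- In Yablo's construction, no consistent valuation exists; moreover,
assuming the defining condition, both `v 0 = true` and `v 0 = false` lead to
contradiction. -/
theorem yablo_no_truth_value :
    (¬ ∃ v : ℕ → Bool, ∀ i : ℕ, (v i = true ↔ ∀ j, i < j → v j = false)) ∧
    (∀ v : ℕ → Bool, (∀ i : ℕ, (v i = true ↔ ∀ j, i < j → v j = false)) →
      v 0 = true → False) ∧
    (∀ v : ℕ → Bool, (∀ i : ℕ, (v i = true ↔ ∀ j, i < j → v j = false)) →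
      v 0 = false → False) := by
  exact ⟨fun ⟨v, h⟩ => yablo_aux v h, fun v h _ => yablo_aux v h, fun v h _ => yablo_aux v h⟩
end

section
/- In the modified Yablo structure with a procrastination branch, Y_1 = true is inconsistent: if Y_1 holds (under the defining equations Y_i ↔ ¬Y_{i+1} ∧ X_{i+2}, X_i ↔ ¬Y_i ∧ X_{i+1}), then X_j holds for all j > 2 and ¬Y_j holds for all j > 1, and from ¬Y_2 one derives a contradiction. -/
/-- In the modified Yablo structure with a procrastination branch
(`Y_i ↔ ¬Y_{i+1} ∧ X_{i+2}` for i ≥ 1, `X_i ↔ ¬Y_i ∧ X_{i+1}` for i ≥ 3),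
the assumption `Y_1 = true` is inconsistent. -/
theorem procrastination_Y1_not_true (Y X : ℕ → Bool)
    (hY : ∀ i, 1 ≤ i → (Y i = true ↔ (Y (i + 1) = false ∧ X (i + 2) = true)))
    (hX : ∀ i, 3 ≤ i → (X i = true ↔ (Y i = false ∧ X (i + 1) = true))) :
    Y 1 ≠ true := by
  intro h1
  obtain ⟨hY2, hX3⟩ := (hY 1 (by norm_num)).mp h1
  -- X j = true for all j ≥ 3
  have hall : ∀ j, 3 ≤ j → X j = true := by
    intro j hj
    induction j with
    | zero => omega
    | succ n ih =>
      rcases Nat.lt_or_ge n 3 with h | h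
      · interval_cases n <;> first | omega | exact hX3
      · exact ((hX n (by omega)).mp (ih (by omega))).2
  have hY3 : Y 3 = false := ((hX 3 (by norm_num)).mp hX3).1
  have : Y 2 = true := (hY 2 (by norm_num)).mpr ⟨hY3, hall 4 (by norm_num)⟩
  simp_all
end

section
/- The two-dimensional Yablo grid is paradoxical: let x_{i,j} for i,j < ω be ordered by a bijective enumeration f of ω×ω (x_{i,j} < x_{i',j'} iff f⁻¹(x_{i,j}) < f⁻¹(x_{i',j'})), and let each x_{i,j} be defined as the disjunction over columns i' of the conjunction of ¬x_{i',j'} over all visible x_{i',j'} in column i'. Then no consistent Boolean valuation of the x_{i,j} exists; in particular x_{0,0} can be neither true nor false. -/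
/-- The two-dimensional Yablo grid is paradoxical: order the nodes `x_{i,j}`
(`i, j < ω`) by a bijective enumeration `f : ℕ ≃ ℕ × ℕ`
(`x < y` iff `f⁻¹ x < f⁻¹ y`), and let each node be the disjunction over
columns `i'` of the conjunction of `¬x_{i',j'}` over all visible elements of
column `i'`. Then no consistent Boolean valuation exists (in particular
`x_{0,0}` can be neither true nor false). -/
theorem two_dimensional_yablo_grid_paradoxical (f : ℕ ≃ ℕ × ℕ) :
    ¬ ∃ v : ℕ × ℕ → Bool, ∀ p : ℕ × ℕ,
      (v p = true ↔ ∃ i' : ℕ,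
        (∃ j' : ℕ, f.symm p < f.symm (i', j')) ∧
        (∀ j' : ℕ, f.symm p < f.symm (i', j') → v (i', j') = false)) := by
  rintro ⟨v, hv⟩
  have key : ∀ (n i : ℕ), ∃ j, n < f.symm (i, j) := by
    intro n i
    by_contra h
    push_neg at h
    have hinj : Function.Injective (fun j => f.symm (i, j)) := by
      intro a b hab
      have := f.symm.injective hab
      exact (Prod.mk.injEq _ _ _ _).mp this |>.2
    exact Set.infinite_range_of_injective hinj
      (Set.Finite.subset (Set.finite_Iic n) (by rintro x ⟨j, rfl⟩; exact h j))
  have allfalse : ∀ p, v p = false := by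
    intro p
    by_contra hp
    have hpt : v p = true := by simpa using hp
    obtain ⟨i', _, hall⟩ := (hv p).mp hpt
    obtain ⟨j', hj'⟩ := key (f.symm p) i'
    have hq : v (i', j') = false := hall j' hj'
    have hq' : v (i', j') = true :=
      (hv (i', j')).mpr ⟨i', key _ i', fun j'' hj'' => hall j'' (hj'.trans hj'')⟩
    simp [hq'] at hq
  have h00 : v (f 0) = true :=
    (hv (f 0)).mpr ⟨0, key _ 0, fun j _ => allfalse _⟩
  simp [allfalse] at h00
end

section
/- The grid with columns of height 2 and the standard enumeration order is NOT paradoxical: with columns C_i = {x_{i,0}, x_{i,1}} and the same disjunction-of-column-conjunctions semantics over the enumeration order, the valuation v(x_{i,0}) = true, v(x_{i,1}) = false for all i is consistent. -/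
/-- The grid with columns of height 2 and the standard enumeration order
(`x_{i,j}` enumerated at position `2i + j`, `j < 2`) is NOT paradoxical:
with the disjunction-of-column-conjunctions semantics, the valuation
`v x_{i,0} = true`, `v x_{i,1} = false` is consistent. -/
theorem height_two_grid_not_paradoxical :
    ∃ v : ℕ × ℕ → Bool,
      (∀ i : ℕ, v (i, 0) = true ∧ v (i, 1) = false) ∧
      (∀ i j : ℕ, j < 2 →
        (v (i, j) = true ↔ ∃ i' : ℕ,
          (∃ j' : ℕ, j' < 2 ∧ 2 * i + j < 2 * i' + j') ∧
          (∀ j' : ℕ, j' < 2 → 2 * i + j < 2 * i' + j' →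
            v (i', j') = false))) := by
  refine ⟨fun p => decide (p.2 = 0), fun i => by simp, fun i j hj => ?_⟩
  interval_cases j
  · simp only [decide_eq_true_eq, decide_eq_false_iff_not]
    constructor
    · intro _
      exact ⟨i, ⟨1, by omega, by omega⟩, fun j' hj' hlt => by omega⟩
    · intro _; trivial
  · simp only [decide_eq_true_eq, decide_eq_false_iff_not]
    constructor
    · intro h; exact absurd h one_ne_zero
    · rintro ⟨i', ⟨j', hj', hlt⟩, hall⟩
      have hi : i < i' := by omega
      exact absurd rfl (hall 0 (by omega) (by omega))
end

section
/- The horizontally ranked grid with columns of height 2 IS paradoxical: with columns C_i = {x_{i,0}, x_{i,1}} and order x_{i,j} < x_{i',j'} iff i < i', and each x_{i,j} defined as the disjunction over i' > i of (¬x_{i',0} ∧ ¬x_{i',1}), there is no consistent Boolean valuation. -/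
/-- The horizontally ranked grid with columns of height 2 IS paradoxical:
with columns `C_i = {x_{i,0}, x_{i,1}}`, order `x_{i,j} < x_{i',j'}` iff
`i < i'`, and each `x_{i,j}` the disjunction over `i' > i` of
`¬x_{i',0} ∧ ¬x_{i',1}`, there is no consistent Boolean valuation. -/
theorem horizontally_ranked_grid_paradoxical :
    ¬ ∃ v : ℕ × ℕ → Bool, ∀ i j : ℕ, j < 2 →
      (v (i, j) = true ↔
        ∃ i' : ℕ, i < i' ∧ v (i', 0) = false ∧ v (i', 1) = false) := by
  rintro ⟨v, hv⟩
  have heq : ∀ i, v (i, 0) = v (i, 1) := by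
    intro i
    have h0 := hv i 0 (by norm_num)
    have h1 := hv i 1 (by norm_num)
    cases h : v (i, 0) <;> cases h' : v (i, 1)
    · rfl
    · exact absurd (h0.mpr (h1.mp h')) (by simp [h])
    · exact absurd (h1.mpr (h0.mp h)) (by simp [h'])
    · rfl
  by_cases hall : ∀ i, v (i, 0) = true
  · obtain ⟨i', _, h0, _⟩ := (hv 0 0 (by norm_num)).mp (hall 0)
    simp [hall i'] at h0
  · push_neg at hall
    obtain ⟨i, hi⟩ := hall
    have hif : v (i, 0) = false := by simpa using hi
    have hno : ¬ ∃ i', i < i' ∧ v (i', 0) = false ∧ v (i', 1) = false := by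
      intro hex
      have := (hv i 0 (by norm_num)).mpr hex
      simp_all
    have hall' : ∀ m, i < m → v (m, 0) = true := by
      intro m hm
      cases h : v (m, 0)
      · exact absurd ⟨m, hm, h, (heq m ▸ h)⟩ hno
      · rfl
    obtain ⟨i', hlt, h0, h1⟩ :=
      (hv (i + 1) 0 (by norm_num)).mp (hall' (i + 1) (Nat.lt_succ_self i))
    have := hall' i' (Nat.lt_trans (Nat.lt_succ_self i) hlt)
    simp_all
end

section
/- The simplified (curled) saw blade is paradoxical: with x_j = ⋀_{i>j} ¬x_i ∧ ¬y and y = y' ∧ ¬y', no consistent Boolean valuation of the x_j, y, y' exists; every x_j can be neither true nor false. -/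
/-- The simplified (curled) saw blade is paradoxical: with
`x_j = ⋀_{i>j} ¬x_i ∧ ¬y` and `y = y' ∧ ¬y'`, there is no consistent Boolean
valuation of the `x_j`, `y`, `y'`. -/
theorem curled_saw_blade_paradoxical :
    ¬ ∃ (x : ℕ → Bool) (y y' : Bool),
      (y = true ↔ (y' = true ∧ y' = false)) ∧
      (∀ j : ℕ, x j = true ↔
        ((∀ i, j < i → x i = false) ∧ y = false)) := by
  rintro ⟨x, y, y', hy, hx⟩
  have hyf : y = false := by
    cases y with
    | false => rfl
    | true => rcases hy.mp rfl with ⟨h1, h2⟩; simp [h1] at h2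
  have hnone : ∀ j, x j = false := by
    intro j
    by_contra h
    have hj : x j = true := by cases hxj : x j <;> simp_all
    have hall := (hx j).mp hj
    have h1 : x (j + 1) = false := hall.1 _ (by omega)
    have h2 : x (j + 1) = true :=
      (hx (j + 1)).mpr ⟨fun i hi => hall.1 i (by omega), hyf⟩
    simp [h1] at h2
  have : x 0 = true := (hx 0).mpr ⟨fun i _ => hnone i, hyf⟩
  simp [hnone 0] at this
end

section
/- The saw blade with decorated teeth is paradoxical: with back nodes x_j and teeth y_j satisfying x_j = ⋀_{i>j} ¬x_i ∧ ⋀_{i≥j-1} ¬y_i (for j>0; x_0 uses all i ≥ 0) and y_j = y'_j ∧ ¬y'_j, there is no consistent Boolean valuation. -/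
/-- The saw blade with decorated teeth is paradoxical: with back nodes `x_j`
and teeth `y_j` satisfying `x_0 = ⋀_{i>0} ¬x_i ∧ ⋀_{i≥0} ¬y_i`, for `j > 0`
`x_j = ⋀_{i>j} ¬x_i ∧ ⋀_{i≥j-1} ¬y_i`, and `y_j = y'_j ∧ ¬y'_j`, there is no
consistent Boolean valuation. -/
theorem decorated_saw_blade_paradoxical :
    ¬ ∃ (x y y' : ℕ → Bool),
      (∀ j : ℕ, y j = true ↔ (y' j = true ∧ y' j = false)) ∧
      (x 0 = true ↔
        ((∀ i, 0 < i → x i = false) ∧ (∀ i, y i = false))) ∧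
      (∀ j : ℕ, 0 < j →
        (x j = true ↔
          ((∀ i, j < i → x i = false) ∧
           (∀ i, j - 1 ≤ i → y i = false)))) := by
  rintro ⟨x, y, y', hy, h0, hj⟩
  have hyf : ∀ i, y i = false := by
    intro i
    cases h : y i with
    | false => rfl
    | true => obtain ⟨h1, h2⟩ := (hy i).1 h; simp [h1] at h2
  -- x j = true ↔ ∀ i > j, x i = false, for all j
  have key : ∀ j, x j = true ↔ ∀ i, j < i → x i = false := by
    intro j
    rcases Nat.eq_zero_or_pos j with rfl | hpos
    · constructor
      · intro h; exact (h0.1 h).1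
      · intro h; exact h0.2 ⟨h, hyf⟩
    · constructor
      · intro h; exact ((hj j hpos).1 h).1
      · intro h; exact (hj j hpos).2 ⟨h, fun i _ => hyf i⟩
  -- no x j can be true
  have hxf : ∀ j, x j = false := by
    intro j
    cases h : x j with
    | false => rfl
    | true =>
      have hall := (key j).1 h
      have : x (j + 1) = true := (key (j + 1)).2 (fun i hi => hall i (by omega))
      have := hall (j + 1) (by omega)
      simp_all
  have : x 0 = true := (key 0).2 (fun i _ => hxf i)
  simp [hxf 0] at this
end

section
/- Local transitivity forces contradiction: in a Yablo-style graph where v(x) = true ↔ ∀ y with x ⋖ y, v(y) = false, if the pair ⟨x_n, x_{n'}⟩ is locally transitive (x_n ⋖ x_{n'} and every x'' with x_{n'} ⋖ x'' also satisfies x_n ⋖ x'') and x_{n'} has at least one ⋖-successor, then v(x_n) = true is impossible. -/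
/-- Local transitivity forces contradiction: in a Yablo-style graph where
`v x = true ↔ ∀ y, x ⋖ y → v y = false` holds at every node with a
successor, if `⟨x_n, x_{n'}⟩` is locally transitive (`x_n ⋖ x_{n'}` and every
`⋖`-successor of `x_{n'}` is a `⋖`-successor of `x_n`) and `x_{n'}` has a
successor, then `v x_n = true` is impossible. -/
theorem locally_transitive_not_true {V : Type} (lt : V → V → Prop)
    (v : V → Bool)
    (hv : ∀ x : V, (∃ y, lt x y) →
      (v x = true ↔ ∀ y, lt x y → v y = false))
    (xn xn' : V)
    (hloc : lt xn xn' ∧ ∀ z, lt xn' z → lt xn z)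
    (hsucc : ∃ z, lt xn' z) :
    v xn ≠ true := by
  intro htrue
  obtain ⟨h1, h2⟩ := hloc
  have hall := (hv xn ⟨xn', h1⟩).mp htrue
  have hfalse : v xn' = false := hall xn' h1
  have : v xn' = true := (hv xn' hsucc).mpr fun z hz => hall z (h2 z hz)
  simp [this] at hfalse
end

section
/- If additionally for every x_n with x_m ⋖ x_n there exists x_{n'} such that ⟨x_n, x_{n'}⟩ is locally transitive (and x_{n'} has a successor), then v(x_m) = false is also impossible; hence if both conditions hold at x_0, the node x_0 admits no truth value. -/
lemma lt_head_not_true {V : Type} (lt : V → V → Prop) (v : V → Bool)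
    (hv : ∀ x : V, (∃ y, lt x y) → (v x = true ↔ ∀ y, lt x y → v y = false))
    {x x' : V} (h1 : lt x x') (h2 : ∀ z, lt x' z → lt x z)
    (h3 : ∃ z, lt x' z) : v x ≠ true := by
  intro hx
  have hall := (hv x ⟨x', h1⟩).mp hx
  have hx' : v x' = false := hall x' h1
  -- v x' ≠ true, so not all successors of x' are false
  have := (hv x' h3)
  rw [hx'] at this
  have hne : ¬ ∀ y, lt x' y → v y = false := by
    intro h; exact absurd (this.mpr h) (by simp)
  push_neg at hne
  obtain ⟨y, hy, hyt⟩ := hne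
  exact hyt (hall y (h2 y hy))

/-- If every `⋖`-successor `x_n` of `x_m` admits some `x_{n'}` such that
`⟨x_n, x_{n'}⟩` is locally transitive (and `x_{n'}` has a successor), then
`v x_m = false` is impossible; hence if moreover `x_m` itself is the head of
a locally transitive pair, `x_m` admits no truth value at all. -/
theorem locally_transitive_no_truth_value {V : Type} (lt : V → V → Prop)
    (v : V → Bool)
    (hv : ∀ x : V, (∃ y, lt x y) →
      (v x = true ↔ ∀ y, lt x y → v y = false))
    (xm : V) (hm : ∃ y, lt xm y)
    (hall : ∀ xn, lt xm xn → ∃ xn',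
      lt xn xn' ∧ (∀ z, lt xn' z → lt xn z) ∧ ∃ z, lt xn' z) :
    (v xm = false → False) ∧
    ((∃ xn', lt xm xn' ∧ (∀ z, lt xn' z → lt xm z) ∧ ∃ z, lt xn' z) →
      False) := by
  have part1 : v xm = false → False := by
    intro hf
    have := hv xm hm
    rw [hf] at this
    have hne : ¬ ∀ y, lt xm y → v y = false := by
      intro h; exact absurd (this.mpr h) (by simp)
    push_neg at hne
    obtain ⟨xn, hxn, hxnt⟩ := hne
    obtain ⟨xn', h1, h2, h3⟩ := hall xn hxn
    exact lt_head_not_true lt v hv h1 h2 h3 (by simpa using hxnt)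
  refine ⟨part1, ?_⟩
  rintro ⟨xn', h1, h2, h3⟩
  have := lt_head_not_true lt v hv h1 h2 h3
  cases h : v xm with
  | false => exact part1 h
  | true => exact this h
end
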